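/- arXiv:2507.21515 — 4 statements merged into one kernel-verified Lean document; each statement's English description precedes it below -/
import Mathlib

section
/- Let e1, e2 divide q^r−1, E = lcm(e1,e2), e = gcd(e1,e2), and A ⊆ F_{q^r}^*. Then N(E,A) ≥ N(e1,A) + N(e2,A) − N(e,A), where N(d,A) counts the d-free elements of A. -/
/-! Being `d`-free only depends on the primes dividing `d`, so `lcm e₁ e₂`-free means `e₁`-free
and `e₂`-free, while both imply `gcd e₁ e₂`-free. The inequality is then inclusion–exclusion for
the `e₁`-free and `e₂`-free elements of `A`, whose union lies among the `gcd e₁ e₂`-free ones. -/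

/-- γ is `d`-free: γ = β^k with k ∣ d implies k = 1. -/
def IsFreeElt {F : Type*} [Field F] (d : ℕ) (γ : Fˣ) : Prop :=
  ∀ (β : Fˣ) (k : ℕ), k ∣ d → γ = β ^ k → k = 1

/-- The number of `d`-free elements of `A`. -/
noncomputable def nFree {F : Type*} [Field F] (d : ℕ) (A : Set Fˣ) : ℕ :=
  {γ ∈ A | IsFreeElt d γ}.ncard

section FreeElements

variable {F : Type*} [Field F]

theorem IsFreeElt.of_dvd {d d' : ℕ} (hd : d' ∣ d) {γ : Fˣ} (h : IsFreeElt d γ) :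
    IsFreeElt d' γ :=
  fun β k hk hγ => h β k (hk.trans hd) hγ

theorem isFreeElt_iff_forall_prime {d : ℕ} {γ : Fˣ} :
    IsFreeElt d γ ↔ ∀ p : ℕ, p.Prime → p ∣ d → ∀ β : Fˣ, γ ≠ β ^ p := by
  constructor
  · intro h p hp hpd β hγ
    exact hp.ne_one (h β p hpd hγ)
  · intro h β k hk hγ
    by_contra hk1
    obtain ⟨p, hp, hpk⟩ := Nat.exists_prime_and_dvd hk1
    refine h p hp (hpk.trans hk) (β ^ (k / p)) ?_
    rw [hγ, ← pow_mul, Nat.div_mul_cancel hpk]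

theorem isFreeElt_lcm_iff {d₁ d₂ : ℕ} {γ : Fˣ} :
    IsFreeElt (Nat.lcm d₁ d₂) γ ↔ IsFreeElt d₁ γ ∧ IsFreeElt d₂ γ := by
  refine ⟨fun h => ⟨h.of_dvd (Nat.dvd_lcm_left _ _), h.of_dvd (Nat.dvd_lcm_right _ _)⟩, ?_⟩
  rintro ⟨h₁, h₂⟩
  rw [isFreeElt_iff_forall_prime] at h₁ h₂ ⊢
  intro p hp hpd
  rcases hp.dvd_mul.mp (hpd.trans (Nat.lcm_dvd_mul d₁ d₂)) with hp₁ | hp₂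
  · exact h₁ p hp hp₁
  · exact h₂ p hp hp₂

theorem nFree_add_nFree_le {A : Set Fˣ} (hA : A.Finite) (d₁ d₂ : ℕ) :
    nFree d₁ A + nFree d₂ A ≤ nFree (Nat.lcm d₁ d₂) A + nFree (Nat.gcd d₁ d₂) A := by
  set S₁ := {γ ∈ A | IsFreeElt d₁ γ}
  set S₂ := {γ ∈ A | IsFreeElt d₂ γ}
  have hlcm : {γ ∈ A | IsFreeElt (Nat.lcm d₁ d₂) γ} = S₁ ∩ S₂ := by
    ext γ
    simp only [S₁, S₂, Set.mem_sep_iff, Set.mem_inter_iff, isFreeElt_lcm_iff]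
    tauto
  have hgcd : S₁ ∪ S₂ ⊆ {γ ∈ A | IsFreeElt (Nat.gcd d₁ d₂) γ} := by
    rintro γ (⟨hγ, h⟩ | ⟨hγ, h⟩)
    · exact ⟨hγ, h.of_dvd (Nat.gcd_dvd_left _ _)⟩
    · exact ⟨hγ, h.of_dvd (Nat.gcd_dvd_right _ _)⟩
  have hS₁ : S₁.Finite := hA.subset (Set.sep_subset _ _)
  have hS₂ : S₂.Finite := hA.subset (Set.sep_subset _ _)
  calc nFree d₁ A + nFree d₂ A = (S₁ ∩ S₂).ncard + (S₁ ∪ S₂).ncard := by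
        rw [add_comm (S₁ ∩ S₂).ncard, Set.ncard_union_add_ncard_inter _ _ hS₁ hS₂]; rfl
    _ ≤ nFree (Nat.lcm d₁ d₂) A + nFree (Nat.gcd d₁ d₂) A := by
        rw [nFree, hlcm]
        exact Nat.add_le_add_left (Set.ncard_le_ncard hgcd (hA.subset (Set.sep_subset _ _))) _

end FreeElements

theorem stmt_5_general
    (F : Type*) [Field F] [Fintype F]
    (e₁ e₂ : ℕ) (A : Set Fˣ) :
    (nFree (Nat.lcm e₁ e₂) A : ℝ) ≥
      (nFree e₁ A : ℝ) + (nFree e₂ A : ℝ) - (nFree (Nat.gcd e₁ e₂) A : ℝ) := by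
  have h := nFree_add_nFree_le A.toFinite e₁ e₂
  rw [ge_iff_le, sub_le_iff_le_add]
  exact_mod_cast h

theorem stmt_5 (q r : ℕ) (hq : IsPrimePow q) (hr : 1 ≤ r)
    (F : Type*) [Field F] [Fintype F] (hF : Fintype.card F = q ^ r)
    (e₁ e₂ : ℕ) (he₁ : e₁ ∣ q ^ r - 1) (he₂ : e₂ ∣ q ^ r - 1) (A : Set Fˣ) :
    (nFree (Nat.lcm e₁ e₂) A : ℝ) ≥
      (nFree e₁ A : ℝ) + (nFree e₂ A : ℝ) - (nFree (Nat.gcd e₁ e₂) A : ℝ) :=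
  stmt_5_general F e₁ e₂ A
end

section
/- (Modified prime sieve) Suppose rad(q^r−1) = k·p_1···p_{s1}·l_1···l_{s2} with all listed primes distinct and coprime to k. Set δ = 1 − Σ 1/p_i, ε = Σ 1/l_j, ρ(k) = φ(k)/k, W(k) = 2^{ω(k)}. Suppose K bounds |Σ_{γ∈A} χ(γ)| for all nontrivial characters χ of order dividing q^r−1, and δ·ρ(k) > ε. If |A| > [ρ(k)W(k)(s1 + 2δ − 1) + s2 − δρ(k) − ε]/(δρ(k) − ε) · K, then A contains a primitive element of F_{q^r}^*. -/
/-- The radical (largest squarefree divisor) of `n`. -/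
def radical (n : ℕ) : ℕ := n.primeFactors.prod id

open Finset
open scoped Classical

/-!
For a prime `t ∣ q ^ r - 1`, the indicator of the elements of `F^*` that are not `t`-th powers is
`(1 - 1/t) - (1/t) ∑ χ γ`, summed over the `t - 1` nontrivial characters with `χ ^ t = 1`.
Multiplying these over a set `T` of such primes and expanding over the subsets `S ⊆ T`, the number
`N_T` of elements of `A` that are `t`-th powers for no `t ∈ T` is `θ(T) |A|`, with
`θ(T) = ∏_{t ∈ T} (1 - 1/t)`, plus character sums over `A` of products of nontrivial characters of
distinct prime orders, which are nontrivial and hence bounded by `K`. In the expansion of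
`N_{T ∪ U}` the terms with `S ⊆ T` add up to `θ(U) N_T`, whence
`|N_{T ∪ U} - θ(U) N_T| ≤ 2^|T| (2^|U| - 1) θ(T ∪ U) K`.

Primitive elements are the elements free for every prime divisor of `q ^ r - 1`, and the pointwise
inequality `N ≥ ∑ᵢ N_{T ∪ {pᵢ}} - (s₁ - 1) N_T - ∑ⱼ #{lⱼ-th powers in A}`, `T` the primes of `k`,
turns these estimates into `N ≥ (δ ρ(k) - ε) |A| - (…) K > 0`.
-/

section CyclicGroup

variable {G : Type*} [CommGroup G]

theorem IsCyclic.exists_pow_eq_iff_pow_card_div_eq_one [Finite G] [IsCyclic G] {t : ℕ}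
    (ht : t ∣ Nat.card G) (γ : G) : (∃ β, β ^ t = γ) ↔ γ ^ (Nat.card G / t) = 1 := by
  have hle : (powMonoidHom t : G →* G).range ≤ (powMonoidHom (Nat.card G / t)).ker := by
    rintro _ ⟨β, rfl⟩
    simp [← pow_mul, Nat.mul_div_cancel' ht]
  have hge : Nat.card (powMonoidHom (Nat.card G / t) : G →* G).ker
      ≤ Nat.card (powMonoidHom t : G →* G).range := by
    rw [IsCyclic.card_powMonoidHom_range, IsCyclic.card_powMonoidHom_ker, Nat.gcd_eq_right ht,
      Nat.gcd_eq_right (Nat.div_dvd_of_dvd ht)]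
  exact SetLike.ext_iff.mp (Subgroup.eq_of_le_of_card_ge hle hge) γ

theorem IsCyclic.zpowers_eq_top_of_forall_prime_not_exists_pow [Finite G] [IsCyclic G] {γ : G}
    (h : ∀ t, t.Prime → t ∣ Nat.card G → ¬ ∃ β, β ^ t = γ) : Subgroup.zpowers γ = ⊤ := by
  refine Subgroup.eq_top_of_card_eq _ ((Subgroup.card_le_card_group _).antisymm ?_)
  by_contra! hlt
  rw [Nat.card_zpowers] at hlt
  obtain ⟨d, hd⟩ := orderOf_dvd_natCard γ
  obtain ⟨t, ht, htd⟩ := Nat.exists_prime_and_dvd (n := d) (by rintro rfl; omega)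
  have htG : t ∣ Nat.card G := htd.trans (Dvd.intro_left _ hd.symm)
  refine h t ht htG ((exists_pow_eq_iff_pow_card_div_eq_one htG γ).mpr ?_)
  rw [← orderOf_dvd_iff_pow_eq_one]
  exact Nat.dvd_div_of_mul_dvd (by rw [hd, mul_comm t]; exact mul_dvd_mul_left _ htd)

theorem orderOf_prod_of_orderOf_prime {ι : Type*} (s : Finset ι) (g : ι → G) (o : ι → ℕ)
    (ho : Set.InjOn o s) (hprime : ∀ i ∈ s, (o i).Prime) (hg : ∀ i ∈ s, orderOf (g i) = o i) :
    orderOf (∏ i ∈ s, g i) = ∏ i ∈ s, o i := by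
  induction s using Finset.induction_on with
  | empty => simp
  | insert a s ha ih =>
    have ih := ih (ho.mono (by simp)) (fun i hi => hprime i (by simp [hi]))
      (fun i hi => hg i (by simp [hi]))
    have hcop : (orderOf (g a)).Coprime (orderOf (∏ i ∈ s, g i)) := by
      rw [ih, hg a (by simp)]
      refine Nat.Coprime.prod_right fun i hi => (Nat.coprime_primes (hprime a (by simp))
        (hprime i (by simp [hi]))).mpr fun h => ?_
      exact ha (ho (by simp) (by simp [hi]) h ▸ hi)
    rw [prod_insert ha, prod_insert ha,
      (Commute.all _ _).orderOf_mul_eq_mul_orderOf_of_coprime hcop, ih, hg a (by simp)]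

end CyclicGroup

theorem MulChar.prod_apply_coe {R R' : Type*} [CommMonoid R] [CommMonoidWithZero R'] {ι : Type*}
    (s : Finset ι) (χ : ι → MulChar R R') (a : Rˣ) : (∏ i ∈ s, χ i) a = ∏ i ∈ s, χ i a := by
  induction s using Finset.cons_induction with
  | empty => simp
  | cons i s hi ih => rw [prod_cons, prod_cons, MulChar.mul_apply, ih]

theorem ite_sieve_le {ι κ : Type*} [Fintype ι] [Fintype κ] {a f : Prop} {b : ι → Prop}
    {d : κ → Prop} [Decidable a] [Decidable f] [DecidablePred b] [DecidablePred d]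
    (hb : ∀ i, b i → a) (hf : a → (∀ i, b i) → (∀ j, d j) → f) :
    ∑ i, (if b i then (1 : ℝ) else 0) - (Fintype.card ι - 1) * (if a then 1 else 0)
      - ∑ j, (1 - if d j then (1 : ℝ) else 0) ≤ if f then 1 else 0 := by
  set A : ℝ := if a then 1 else 0
  have hA : A ≤ 1 := by simp only [A]; split_ifs <;> norm_num
  have hAb : ∀ i, 0 ≤ A - if b i then 1 else 0 := fun i => by
    simp only [A]; split_ifs <;> simp_all
  have hd : ∀ j, 0 ≤ 1 - if d j then (1 : ℝ) else 0 := fun j => by split_ifs <;> norm_num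
  have hrw : ∑ i, (if b i then (1 : ℝ) else 0) - (Fintype.card ι - 1) * A
      = A - ∑ i, (A - if b i then 1 else 0) := by
    rw [sum_sub_distrib, sum_const, card_univ, nsmul_eq_mul]; ring
  rw [hrw]
  have hAb_sum := sum_nonneg fun i (_ : i ∈ univ) => hAb i
  have hd_sum := sum_nonneg fun j (_ : j ∈ univ) => hd j
  split_ifs with hfγ
  · linarith
  by_cases ha : a
  · have hA1 : A = 1 := if_pos ha
    by_cases hball : ∀ i, b i
    · obtain ⟨j, hj⟩ : ∃ j, ¬ d j := by
        by_contra! h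
        exact hfγ (hf ha hball h)
      have := single_le_sum (fun j _ => hd j) (mem_univ j)
      rw [if_neg hj, sub_zero] at this
      linarith
    · obtain ⟨i, hi⟩ := not_forall.mp hball
      have := single_le_sum (fun i _ => hAb i) (mem_univ i)
      rw [if_neg hi, sub_zero] at this
      linarith
  · have hA0 : A = 0 := if_neg ha
    linarith

section FreeCount

variable {G : Type*} [Monoid G]

noncomputable def freeCount (B : Finset G) (T : Finset ℕ) : ℕ :=
  #{γ ∈ B | ∀ t ∈ T, ¬ ∃ β, β ^ t = γ}

@[simp]
theorem freeCount_empty (B : Finset G) : freeCount B ∅ = #B := by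
  simp [freeCount]

theorem freeCount_sieve {ι κ : Type*} [Fintype ι] [Fintype κ] (B : Finset G) (T : Finset ℕ)
    (p : ι → ℕ) (l : κ → ℕ) :
    ∑ i, (freeCount B (T ∪ {p i}) : ℝ) - (Fintype.card ι - 1) * freeCount B T
      - ∑ j, ((#B : ℝ) - freeCount B {l j})
      ≤ freeCount B (T ∪ univ.image p ∪ univ.image l) := by
  have key := sum_le_sum fun γ (_ : γ ∈ B) => ite_sieve_le
    (a := ∀ t ∈ T, ¬ ∃ β, β ^ t = γ) (b := fun i => ∀ t ∈ T ∪ {p i}, ¬ ∃ β, β ^ t = γ)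
    (d := fun j => ∀ t ∈ ({l j} : Finset ℕ), ¬ ∃ β, β ^ t = γ)
    (f := ∀ t ∈ T ∪ univ.image p ∪ univ.image l, ¬ ∃ β, β ^ t = γ)
    (fun i h t ht => h t (mem_union_left _ ht)) fun ha hb hd t ht => by
      simp only [mem_union, mem_image, mem_univ, true_and] at ht
      rcases ht with (ht | ⟨i, rfl⟩) | ⟨j, rfl⟩
      · exact ha t ht
      · exact hb i _ (mem_union_right _ (mem_singleton_self _))
      · exact hd j _ (mem_singleton_self _)
  simp only [freeCount, natCast_card_filter]
  refine le_trans (le_of_eq ?_) (key.trans_eq (sum_congr rfl fun γ _ => by congr))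
  simp only [sum_sub_distrib, ← mul_sum, sum_const, nsmul_eq_mul, mul_one, mul_comm]
  rw [sum_comm (s := univ), sum_comm (s := univ)]

end FreeCount

theorem exists_zpowers_eq_top_of_freeCount_pos {G : Type*} [CommGroup G] [Finite G] [IsCyclic G]
    {B : Finset G} {T : Finset ℕ} (hT : ∀ t, t.Prime → t ∣ Nat.card G → t ∈ T)
    (hpos : 0 < freeCount B T) : ∃ γ ∈ B, Subgroup.zpowers γ = ⊤ := by
  obtain ⟨γ, hγ⟩ := card_pos.mp hpos
  rw [mem_filter] at hγ
  exact ⟨γ, hγ.1, IsCyclic.zpowers_eq_top_of_forall_prime_not_exists_pow fun t ht htG =>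
    hγ.2 t (hT t ht htG)⟩

noncomputable def freeDensity (T : Finset ℕ) : ℝ := ∏ t ∈ T, (1 - (t : ℝ)⁻¹)

theorem freeDensity_union_singleton {T : Finset ℕ} {p : ℕ} (hpT : p ∉ T) :
    freeDensity (T ∪ {p}) = freeDensity T * (1 - (p : ℝ)⁻¹) := by
  rw [freeDensity, prod_union (disjoint_singleton_right.mpr hpT), prod_singleton, freeDensity]

theorem totient_div_eq_freeDensity {k : ℕ} (hk : k ≠ 0) :
    (k.totient : ℝ) / k = freeDensity k.primeFactors := by
  have h := congrArg (Rat.cast : ℚ → ℝ) (Nat.totient_eq_mul_prod_factors k)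
  push_cast at h
  rw [h, freeDensity, mul_div_cancel_left₀ _ (Nat.cast_ne_zero.mpr hk)]

noncomputable def sieveCoeff (T S : Finset ℕ) : ℝ :=
  (∏ t ∈ S, -(t : ℝ)⁻¹) * ∏ t ∈ T \ S, (1 - (t : ℝ)⁻¹)

theorem sieveCoeff_union {T U S : Finset ℕ} (hS : S ⊆ T) (hTU : Disjoint T U) :
    sieveCoeff (T ∪ U) S = freeDensity U * sieveCoeff T S := by
  rw [sieveCoeff, sieveCoeff, freeDensity, union_sdiff_distrib, sdiff_eq_self_of_disjoint
    (hTU.symm.mono_right hS), prod_union (hTU.mono_left sdiff_subset)]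
  ring

theorem abs_sieveCoeff_mul_prod {T S : Finset ℕ} (hS : S ⊆ T) (hT : ∀ t ∈ T, 1 ≤ t) :
    |sieveCoeff T S| * ∏ t ∈ S, ((t : ℝ) - 1) = freeDensity T := by
  have hnonneg : ∀ t ∈ T, 0 ≤ 1 - (t : ℝ)⁻¹ := fun t ht =>
    sub_nonneg.mpr (inv_le_one_of_one_le₀ (by exact_mod_cast hT t ht))
  rw [sieveCoeff, abs_mul, abs_prod,
    abs_of_nonneg (prod_nonneg fun t ht => hnonneg t (sdiff_subset ht)), freeDensity,
    ← prod_sdiff hS, mul_right_comm, mul_comm, ← prod_mul_distrib]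
  congr 1
  refine prod_congr rfl fun t ht => ?_
  have ht0 : (t : ℝ) ≠ 0 := by exact_mod_cast (Nat.one_le_iff_ne_zero.mp (hT t (hS ht)))
  rw [abs_neg, abs_inv, Nat.abs_cast]
  field_simp

section CharacterSums

variable {F : Type*} [Field F] [Fintype F] [Fintype (MulChar F ℂ)]

variable (F) in
noncomputable def charsPowEqOne (t : ℕ) : Finset (MulChar F ℂ) := {χ | χ ^ t = 1}

@[simp]
theorem mem_charsPowEqOne {t : ℕ} {χ : MulChar F ℂ} : χ ∈ charsPowEqOne F t ↔ χ ^ t = 1 := by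
  simp [charsPowEqOne]

theorem card_charsPowEqOne {t : ℕ} (ht : t ∣ Nat.card Fˣ) : #(charsPowEqOne F t) = t := by
  obtain ⟨e⟩ := MulChar.mulEquiv_units F ℂ
  have : IsCyclic (MulChar F ℂ) := isCyclic_of_surjective e.symm e.symm.surjective
  have hcard := IsCyclic.card_powMonoidHom_ker (MulChar F ℂ) t
  rw [Nat.card_congr e.toEquiv, Nat.gcd_eq_right ht] at hcard
  rw [charsPowEqOne, ← Fintype.card_subtype, ← Nat.card_eq_fintype_card]
  exact hcard

theorem apply_pow_eq_one_of_mem_charsPowEqOne {t : ℕ} {χ : MulChar F ℂ}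
    (hχ : χ ∈ charsPowEqOne F t) (β : Fˣ) : χ ↑(β ^ t) = 1 := by
  rw [Units.val_pow_eq_pow_val, map_pow, ← MulChar.pow_apply_coe, mem_charsPowEqOne.mp hχ,
    MulChar.one_apply_coe]

theorem exists_mem_charsPowEqOne_apply_ne_one {t : ℕ} (ht : t ∣ Nat.card Fˣ) {γ : Fˣ}
    (hγ : ¬ ∃ β, β ^ t = γ) : ∃ χ ∈ charsPowEqOne F t, χ γ ≠ 1 := by
  rw [IsCyclic.exists_pow_eq_iff_pow_card_div_eq_one ht] at hγ
  obtain ⟨ψ, hψ⟩ := MulChar.exists_apply_ne_one_of_hasEnoughRootsOfUnity F ℂ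
    (a := ↑(γ ^ (Nat.card Fˣ / t))) (by rwa [Ne, Units.val_eq_one])
  refine ⟨ψ ^ (Nat.card Fˣ / t), ?_, ?_⟩
  · have hψn : ψ ^ Nat.card Fˣ = 1 := by
      rw [← orderOf_dvd_iff_pow_eq_one, Nat.card_eq_fintype_card, Fintype.card_units]
      exact MulChar.orderOf_dvd_card_sub_one F ψ
    rw [mem_charsPowEqOne, ← pow_mul, Nat.div_mul_cancel ht, hψn]
  · rwa [MulChar.pow_apply_coe, ← map_pow, ← Units.val_pow_eq_pow_val]

theorem sum_charsPowEqOne_apply {t : ℕ} (ht : t ∣ Nat.card Fˣ) (γ : Fˣ) :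
    ∑ χ ∈ charsPowEqOne F t, χ γ = if ∃ β, β ^ t = γ then (t : ℂ) else 0 := by
  split_ifs with hγ
  · obtain ⟨β, rfl⟩ := hγ
    rw [sum_congr rfl fun χ hχ => apply_pow_eq_one_of_mem_charsPowEqOne hχ β, sum_const,
      card_charsPowEqOne ht, nsmul_one]
  obtain ⟨χ₀, hχ₀, hχ₀γ⟩ := exists_mem_charsPowEqOne_apply_ne_one ht hγ
  -- multiplication by `χ₀` permutes `charsPowEqOne F t`
  have hinv : χ₀ γ * ∑ χ ∈ charsPowEqOne F t, χ γ = ∑ χ ∈ charsPowEqOne F t, χ γ := by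
    rw [mul_sum]
    refine sum_nbij' (χ₀ * ·) (χ₀⁻¹ * ·) ?_ ?_ (by simp) (by simp) (by simp [MulChar.mul_apply])
    all_goals
      intro χ hχ
      simp_all [mul_pow]
  exact (mul_left_eq_self₀.mp hinv).resolve_left hχ₀γ

variable (F) in
noncomputable def nontrivialChars (t : ℕ) : Finset (MulChar F ℂ) := (charsPowEqOne F t).erase 1

theorem card_nontrivialChars {t : ℕ} (ht : t ∣ Nat.card Fˣ) : #(nontrivialChars F t) = t - 1 := by
  rw [nontrivialChars, card_erase_of_mem (by simp), card_charsPowEqOne ht]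

theorem ite_not_exists_pow_eq {t : ℕ} (ht : t ∣ Nat.card Fˣ) (γ : Fˣ) :
    (if ¬ ∃ β, β ^ t = γ then 1 else 0 : ℂ)
      = -(t : ℂ)⁻¹ * ∑ χ ∈ nontrivialChars F t, χ γ + (1 - (t : ℂ)⁻¹) := by
  have ht0 : (t : ℂ) ≠ 0 := by
    exact_mod_cast ne_zero_of_dvd_ne_zero Nat.card_pos.ne' ht
  rw [nontrivialChars, sum_erase_eq_sub (by simp), sum_charsPowEqOne_apply ht,
    MulChar.one_apply_coe]
  split_ifs <;> field_simp <;> ring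

theorem prod_ne_one_of_mem_piFinset_nontrivialChars {S : Finset ℕ} (hS : ∀ t ∈ S, t.Prime)
    (hne : S.Nonempty) {f : S → MulChar F ℂ}
    (hf : f ∈ Fintype.piFinset fun t : S => nontrivialChars F t) : ∏ t, f t ≠ 1 := by
  have hord : ∀ t ∈ univ, orderOf (f t) = (t : ℕ) := fun t _ => by
    have hft := Fintype.mem_piFinset.mp hf t
    rw [nontrivialChars, mem_erase, mem_charsPowEqOne] at hft
    have := Fact.mk (hS t t.2)
    exact orderOf_eq_prime hft.2 hft.1
  have hprod := orderOf_prod_of_orderOf_prime univ f Subtype.val Subtype.val_injective.injOn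
    (fun t _ => hS t t.2) hord
  intro h
  rw [h, orderOf_one] at hprod
  obtain ⟨t₀, ht₀⟩ := hne
  exact (hS t₀ ht₀).ne_one
    (Nat.dvd_one.mp (hprod ▸ dvd_prod_of_mem Subtype.val (mem_univ (⟨t₀, ht₀⟩ : S))))

variable (F) in
noncomputable def charSum (B : Finset Fˣ) (S : Finset ℕ) : ℂ :=
  ∑ γ ∈ B, ∏ t ∈ S, ∑ χ ∈ nontrivialChars F t, χ γ

theorem freeCount_eq_sum_powerset (B : Finset Fˣ) {T : Finset ℕ} (hT : ∀ t ∈ T, t ∣ Nat.card Fˣ) :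
    (freeCount B T : ℂ) = ∑ S ∈ T.powerset, (sieveCoeff T S : ℂ) * charSum F B S := by
  have hexpand : ∀ γ : Fˣ, (if ∀ t ∈ T, ¬ ∃ β, β ^ t = γ then 1 else 0 : ℂ)
      = ∑ S ∈ T.powerset, (sieveCoeff T S : ℂ) * ∏ t ∈ S, ∑ χ ∈ nontrivialChars F t, χ γ := by
    intro γ
    rw [← prod_boole, prod_congr rfl fun t ht => ite_not_exists_pow_eq (hT t ht) γ, prod_add]
    refine sum_congr rfl fun S _ => ?_
    push_cast [sieveCoeff, prod_mul_distrib]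
    ring
  rw [freeCount, natCast_card_filter, sum_congr rfl fun γ _ => by convert hexpand γ, sum_comm]
  simp_rw [charSum, mul_sum]

variable {B : Finset Fˣ} {K : ℝ}

theorem norm_charSum_le
    (hK : ∀ χ : MulChar F ℂ, χ ≠ 1 → ‖∑ γ ∈ B, χ γ‖ ≤ K) {S : Finset ℕ}
    (hS : ∀ t ∈ S, t.Prime ∧ t ∣ Nat.card Fˣ) (hne : S.Nonempty) :
    ‖charSum F B S‖ ≤ (∏ t ∈ S, ((t : ℝ) - 1)) * K := by
  set X := Fintype.piFinset fun t : S => nontrivialChars F t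
  have hexpand : charSum F B S = ∑ f ∈ X, ∑ γ ∈ B, (∏ t, f t) γ := by
    rw [charSum, sum_comm]
    refine sum_congr rfl fun γ _ => ?_
    rw [← prod_coe_sort, prod_univ_sum]
    simp_rw [MulChar.prod_apply_coe]
    rfl
  calc ‖charSum F B S‖ ≤ ∑ f ∈ X, ‖∑ γ ∈ B, (∏ t, f t) γ‖ := hexpand ▸ norm_sum_le _ _
    _ ≤ ∑ f ∈ X, K := sum_le_sum fun f hf =>
      hK _ (prod_ne_one_of_mem_piFinset_nontrivialChars (fun t ht => (hS t ht).1) hne hf)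
    _ = (∏ t ∈ S, ((t : ℝ) - 1)) * K := by
      rw [sum_const, nsmul_eq_mul, Fintype.card_piFinset, ← prod_coe_sort S, Nat.cast_prod]
      congr 1
      refine prod_congr rfl fun t _ => ?_
      rw [card_nontrivialChars (hS t t.2).2, Nat.cast_sub (hS t t.2).1.one_le, Nat.cast_one]

theorem norm_sieveCoeff_mul_charSum_le
    (hK : ∀ χ : MulChar F ℂ, χ ≠ 1 → ‖∑ γ ∈ B, χ γ‖ ≤ K) {T S : Finset ℕ}
    (hT : ∀ t ∈ T, t.Prime ∧ t ∣ Nat.card Fˣ) (hS : S ⊆ T) (hne : S.Nonempty) :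
    ‖(sieveCoeff T S : ℂ) * charSum F B S‖ ≤ freeDensity T * K := by
  rw [norm_mul, Complex.norm_real, Real.norm_eq_abs,
    ← abs_sieveCoeff_mul_prod hS fun t ht => (hT t ht).1.one_le, mul_assoc]
  exact mul_le_mul_of_nonneg_left (norm_charSum_le hK (fun t ht => hT t (hS ht)) hne)
    (abs_nonneg _)

theorem abs_freeCount_union_sub_le
    (hK : ∀ χ : MulChar F ℂ, χ ≠ 1 → ‖∑ γ ∈ B, χ γ‖ ≤ K) {T U : Finset ℕ} (hTU : Disjoint T U)
    (hT : ∀ t ∈ T ∪ U, t.Prime ∧ t ∣ Nat.card Fˣ) :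
    |(freeCount B (T ∪ U) : ℝ) - freeDensity U * freeCount B T|
      ≤ 2 ^ #T * (2 ^ #U - 1) * freeDensity (T ∪ U) * K := by
  have hsub : T.powerset ⊆ (T ∪ U).powerset := powerset_mono.mpr subset_union_left
  have hcoeff : ∑ S ∈ T.powerset, (sieveCoeff (T ∪ U) S : ℂ) * charSum F B S
      = ∑ S ∈ T.powerset, (freeDensity U : ℂ) * ((sieveCoeff T S : ℂ) * charSum F B S) :=
    sum_congr rfl fun S hS => by
      rw [sieveCoeff_union (mem_powerset.mp hS) hTU, Complex.ofReal_mul, mul_assoc]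
  have hdiff : (((freeCount B (T ∪ U) : ℝ) - freeDensity U * freeCount B T : ℝ) : ℂ)
      = ∑ S ∈ (T ∪ U).powerset \ T.powerset, (sieveCoeff (T ∪ U) S : ℂ) * charSum F B S := by
    rw [Complex.ofReal_sub, Complex.ofReal_mul, Complex.ofReal_natCast, Complex.ofReal_natCast,
      freeCount_eq_sum_powerset B fun t ht => (hT t ht).2, ← sum_sdiff hsub,
      freeCount_eq_sum_powerset B fun t ht => (hT t (mem_union_left _ ht)).2, mul_sum, hcoeff,
      add_sub_cancel_right]
  have hcard : (#((T ∪ U).powerset \ T.powerset) : ℝ) = 2 ^ #T * (2 ^ #U - 1) := by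
    rw [card_sdiff_of_subset hsub, card_powerset, card_powerset, card_union_of_disjoint hTU]
    push_cast [Nat.cast_sub (Nat.pow_le_pow_right two_pos (Nat.le_add_right _ _))]
    ring
  rw [← Real.norm_eq_abs, ← Complex.norm_real, hdiff, ← hcard, mul_assoc, ← nsmul_eq_mul,
    ← sum_const]
  refine (norm_sum_le _ _).trans (sum_le_sum fun S hS => ?_)
  rw [mem_sdiff, mem_powerset, mem_powerset] at hS
  exact norm_sieveCoeff_mul_charSum_le hK hT hS.1
    (nonempty_iff_ne_empty.mpr fun h => hS.2 (h ▸ empty_subset T))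

theorem freeDensity_mul_le_freeCount
    (hK : ∀ χ : MulChar F ℂ, χ ≠ 1 → ‖∑ γ ∈ B, χ γ‖ ≤ K) {T : Finset ℕ}
    (hT : ∀ t ∈ T, t.Prime ∧ t ∣ Nat.card Fˣ) :
    freeDensity T * #B - (2 ^ #T - 1) * freeDensity T * K ≤ freeCount B T := by
  have h := abs_freeCount_union_sub_le hK (disjoint_empty_left T) (by rwa [empty_union])
  simp only [empty_union, freeCount_empty, card_empty, pow_zero, one_mul] at h
  linarith [(abs_le.mp h).1]

theorem freeCount_union_singleton_ge
    (hK : ∀ χ : MulChar F ℂ, χ ≠ 1 → ‖∑ γ ∈ B, χ γ‖ ≤ K) {T : Finset ℕ}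
    (hT : ∀ t ∈ T, t.Prime ∧ t ∣ Nat.card Fˣ)
    {p : ℕ} (hp : p.Prime) (hpn : p ∣ Nat.card Fˣ) (hpT : p ∉ T) :
    (1 - (p : ℝ)⁻¹) * (freeCount B T - 2 ^ #T * freeDensity T * K) ≤ freeCount B (T ∪ {p}) := by
  have h := abs_freeCount_union_sub_le hK (disjoint_singleton_right.mpr hpT) fun t ht =>
    (mem_union.mp ht).elim (hT t) fun ht => mem_singleton.mp ht ▸ ⟨hp, hpn⟩
  rw [freeDensity_union_singleton hpT, freeDensity, prod_singleton, card_singleton] at h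
  linarith [(abs_le.mp h).1]

theorem card_sub_freeCount_singleton_le
    (hK : ∀ χ : MulChar F ℂ, χ ≠ 1 → ‖∑ γ ∈ B, χ γ‖ ≤ K) {l : ℕ} (hl : l.Prime)
    (hln : l ∣ Nat.card Fˣ) :
    (#B : ℝ) - freeCount B {l} ≤ #B * (l : ℝ)⁻¹ + (1 - (l : ℝ)⁻¹) * K := by
  have h := freeDensity_mul_le_freeCount hK (T := {l}) fun t ht => mem_singleton.mp ht ▸ ⟨hl, hln⟩
  rw [freeDensity, prod_singleton, card_singleton] at h
  linarith

theorem freeCount_sieve_lower_bound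
    (hK : ∀ χ : MulChar F ℂ, χ ≠ 1 → ‖∑ γ ∈ B, χ γ‖ ≤ K) {ι κ : Type*} [Fintype ι] [Fintype κ]
    {k : ℕ} {p : ι → ℕ} {l : κ → ℕ} (hp : ∀ i, (p i).Prime) (hl : ∀ j, (l j).Prime)
    (hpk : ∀ i, ¬ p i ∣ k) (hdvd : k * (∏ i, p i) * ∏ j, l j ∣ Nat.card Fˣ)
    {δ ε ρ W : ℝ} (hδ : δ = 1 - ∑ i, 1 / (p i : ℝ)) (hε : ε = ∑ j, 1 / (l j : ℝ))
    (hρ : ρ = k.totient / k) (hW : W = 2 ^ #k.primeFactors) (hδ0 : 0 ≤ δ) :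
    (δ * ρ - ε) * #B - (ρ * W * (Fintype.card ι + 2 * δ - 1) + Fintype.card κ - δ * ρ - ε) * K
      ≤ freeCount B (k.primeFactors ∪ univ.image p ∪ univ.image l) := by
  set T := k.primeFactors
  have hk : k ∣ Nat.card Fˣ := (dvd_mul_right _ _).trans ((dvd_mul_right _ _).trans hdvd)
  have hpn : ∀ i, p i ∣ Nat.card Fˣ := fun i =>
    ((dvd_prod_of_mem p (mem_univ i)).trans (dvd_mul_left _ _)).trans
      ((dvd_mul_right _ _).trans hdvd)
  have hln : ∀ j, l j ∣ Nat.card Fˣ := fun j =>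
    ((dvd_prod_of_mem l (mem_univ j)).trans (dvd_mul_left _ _)).trans hdvd
  have hT : ∀ t ∈ T, t.Prime ∧ t ∣ Nat.card Fˣ := fun t ht =>
    ⟨Nat.prime_of_mem_primeFactors ht, (Nat.dvd_of_mem_primeFactors ht).trans hk⟩
  have hρT : ρ = freeDensity T :=
    hρ.trans (totient_div_eq_freeDensity (ne_zero_of_dvd_ne_zero Nat.card_pos.ne' hk))
  have hN := mul_le_mul_of_nonneg_left (freeDensity_mul_le_freeCount hK hT) hδ0
  have hNp := sum_le_sum fun i (_ : i ∈ univ) => freeCount_union_singleton_ge hK hT (hp i) (hpn i)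
    fun h => hpk i (Nat.dvd_of_mem_primeFactors h)
  have hNl := sum_le_sum fun j (_ : j ∈ univ) => card_sub_freeCount_singleton_le hK (hl j) (hln j)
  simp only [one_div] at hδ hε
  have hsum_p : ∑ i, (1 - (p i : ℝ)⁻¹) = Fintype.card ι - 1 + δ := by
    rw [sum_sub_distrib, sum_const, card_univ, nsmul_one, hδ]; ring
  have hsum_l : ∑ j, (1 - (l j : ℝ)⁻¹) = Fintype.card κ - ε := by
    rw [sum_sub_distrib, sum_const, card_univ, nsmul_one, hε]
  rw [← sum_mul, hsum_p] at hNp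
  rw [sum_add_distrib, ← mul_sum, ← sum_mul, hsum_l, ← hε] at hNl
  have hsieve := freeCount_sieve B T p l
  subst hρT hW
  linear_combination hsieve + hNp + hNl + hN

end CharacterSums

theorem radical_dvd_self (n : ℕ) : radical n ∣ n := by
  simpa [radical] using Nat.prod_primeFactors_dvd n

theorem mem_union_image_of_radical_eq {ι κ : Type*} [Fintype ι] [Fintype κ] {n k : ℕ} {p : ι → ℕ}
    {l : κ → ℕ} (hp : ∀ i, (p i).Prime) (hl : ∀ j, (l j).Prime)
    (hrad : radical n = k * (∏ i, p i) * ∏ j, l j) (hn : n ≠ 0) {t : ℕ} (ht : t.Prime)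
    (htn : t ∣ n) : t ∈ k.primeFactors ∪ univ.image p ∪ univ.image l := by
  have htrad : t ∣ radical n := dvd_prod_of_mem id (Nat.mem_primeFactors.mpr ⟨ht, htn, hn⟩)
  have hk : k ≠ 0 := by
    rintro rfl
    exact hn (Nat.eq_zero_of_zero_dvd (by simpa [hrad] using radical_dvd_self n))
  rw [hrad] at htrad
  simp only [mem_union, mem_image, mem_univ, true_and, Nat.mem_primeFactors, ne_eq]
  rcases (Nat.Prime.dvd_mul ht).mp htrad with htk | htl
  · rcases (Nat.Prime.dvd_mul ht).mp htk with htk | htp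
    · exact .inl (.inl ⟨ht, htk, hk⟩)
    · obtain ⟨i, -, hi⟩ := (ht.prime.dvd_finsetProd_iff p).mp htp
      exact .inl (.inr ⟨i, ((Nat.prime_dvd_prime_iff_eq ht (hp i)).mp hi).symm⟩)
  · obtain ⟨j, -, hj⟩ := (ht.prime.dvd_finsetProd_iff l).mp htl
    exact .inr ⟨j, ((Nat.prime_dvd_prime_iff_eq ht (hl j)).mp hj).symm⟩

theorem stmt_9_general (q r : ℕ)
    (F : Type*) [Field F] [Fintype F] (hF : Fintype.card F = q ^ r)
    (s₁ s₂ k : ℕ) (p : Fin s₁ → ℕ) (l : Fin s₂ → ℕ)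
    (hp : ∀ i, (p i).Prime) (hl : ∀ j, (l j).Prime)
    (hpk : ∀ i, ¬ p i ∣ k)
    (hrad : radical (q ^ r - 1) = k * (∏ i, p i) * ∏ j, l j)
    (A : Set Fˣ) (K : ℝ)
    (hK : ∀ χ : MulChar F ℂ, χ ≠ 1 → orderOf χ ∣ q ^ r - 1 →
      ‖∑ᶠ γ ∈ A, χ (γ : F)‖ ≤ K)
    (δ ε ρk Wk : ℝ)
    (hδ : δ = 1 - ∑ i, 1 / (p i : ℝ)) (hε : ε = ∑ j, 1 / (l j : ℝ))
    (hρk : ρk = (k.totient : ℝ) / (k : ℝ)) (hWk : Wk = 2 ^ k.primeFactors.card)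
    (hsieve : δ * ρk > ε)
    (hA : (A.ncard : ℝ) >
      (ρk * Wk * ((s₁ : ℝ) + 2 * δ - 1) + (s₂ : ℝ) - δ * ρk - ε) / (δ * ρk - ε) * K) :
    ∃ γ ∈ A, Subgroup.zpowers γ = ⊤ := by
  let : Fintype (MulChar F ℂ) := Fintype.ofFinite _
  have hn : Nat.card Fˣ = q ^ r - 1 := by rw [Nat.card_eq_fintype_card, Fintype.card_units, hF]
  set B := A.toFinite.toFinset
  have hKB : ∀ χ : MulChar F ℂ, χ ≠ 1 → ‖∑ γ ∈ B, χ γ‖ ≤ K := fun χ hχ => by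
    have := hK χ hχ (hF ▸ MulChar.orderOf_dvd_card_sub_one F χ)
    rwa [← A.toFinite.coe_toFinset, finsum_mem_coe_finset] at this
  have hε0 : 0 ≤ ε := hε ▸ sum_nonneg fun j _ => by positivity
  have hρk0 : 0 ≤ ρk := hρk ▸ by positivity
  have hδ0 : 0 ≤ δ := by
    by_contra! h
    nlinarith
  have hbound := freeCount_sieve_lower_bound hKB hp hl hpk (hn ▸ hrad ▸ radical_dvd_self _) hδ hε
    hρk hWk hδ0
  rw [Set.ncard_eq_toFinset_card A, gt_iff_lt, div_mul_eq_mul_div, div_lt_iff₀ (by linarith)] at hA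
  simp only [Fintype.card_fin] at hbound
  have hpos : (0 : ℝ) < freeCount B (k.primeFactors ∪ univ.image p ∪ univ.image l) := by
    linarith
  refine (exists_zpowers_eq_top_of_freeCount_pos (fun t ht htn => ?_) (by exact_mod_cast hpos)).imp
    fun γ hγ => ⟨A.toFinite.mem_toFinset.mp hγ.1, hγ.2⟩
  exact mem_union_image_of_radical_eq hp hl hrad (hn ▸ Nat.card_pos.ne') ht (hn ▸ htn)

/-- The modified prime sieve. -/
theorem stmt_9 (q r : ℕ) (hq : IsPrimePow q) (hr : 2 ≤ r)
    (F : Type*) [Field F] [Fintype F] (hF : Fintype.card F = q ^ r)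
    (s₁ s₂ k : ℕ) (p : Fin s₁ → ℕ) (l : Fin s₂ → ℕ)
    (hp : ∀ i, (p i).Prime) (hl : ∀ j, (l j).Prime)
    (hpinj : Function.Injective p) (hlinj : Function.Injective l)
    (hpl : ∀ i j, p i ≠ l j)
    (hpk : ∀ i, ¬ p i ∣ k) (hlk : ∀ j, ¬ l j ∣ k)
    (hrad : radical (q ^ r - 1) = k * (∏ i, p i) * ∏ j, l j)
    (A : Set Fˣ) (K : ℝ)
    (hK : ∀ χ : MulChar F ℂ, χ ≠ 1 → orderOf χ ∣ q ^ r - 1 →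
      ‖∑ᶠ γ ∈ A, χ (γ : F)‖ ≤ K)
    (δ ε ρk Wk : ℝ)
    (hδ : δ = 1 - ∑ i, 1 / (p i : ℝ)) (hε : ε = ∑ j, 1 / (l j : ℝ))
    (hρk : ρk = (k.totient : ℝ) / (k : ℝ)) (hWk : Wk = 2 ^ k.primeFactors.card)
    (hsieve : δ * ρk > ε)
    (hA : (A.ncard : ℝ) >
      (ρk * Wk * ((s₁ : ℝ) + 2 * δ - 1) + (s₂ : ℝ) - δ * ρk - ε) / (δ * ρk - ε) * K) :
    ∃ γ ∈ A, Subgroup.zpowers γ = ⊤ :=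
  stmt_9_general q r F hF s₁ s₂ k p l hp hl hpk hrad A K hK δ ε ρk Wk hδ hε hρk hWk hsieve hA
end

section
/- (Unsieved bound) Suppose K bounds |Σ_{γ∈A} χ(γ)| for all nontrivial multiplicative characters χ of F_{q^r}^* of order dividing q^r−1. If |A| > (W(q^r−1) − 1)·K, where W(n) = 2^{ω(n)}, then A contains a primitive element of F_{q^r}^*. -/
/-!
Let `n = q ^ r - 1` and let `ψ` be a complex character of order `n`. If `γ` is not primitive,
then `γ ^ (n / p) = 1` for some prime `p ∣ n`, so the factor
`1 - (p - 1)⁻¹ ∑_{k=1}^{p-1} ψ(γ) ^ (k n / p)` of the product over the primes dividing `n`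
vanishes at `γ`. If `A` had no primitive element, summing this product over `A` and expanding
it would give `|A|` plus `2 ^ ω(n) - 1` terms, each an average of sums over `A` of the
characters `ψ ^ (∑ k_p n / p)` with `0 < k_p < p`. Comparing `p`-adic valuations shows that
`n ∤ ∑ k_p n / p`, so these characters are nontrivial and each term has norm at most `K`.
-/

open Finset

theorem Nat.not_dvd_sum_mul_div_primeFactors {ι : Type*} {s : Finset ι} {n : ℕ} {p k : ι → ℕ}
    (hp : ∀ i ∈ s, p i ∈ n.primeFactors) (hinj : Set.InjOn p s) {i₀ : ι} (hi₀ : i₀ ∈ s)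
    (hk : ¬ p i₀ ∣ k i₀) :
    ¬ n ∣ ∑ i ∈ s, k i * (n / p i) := by
  classical
  obtain ⟨hp₀, hp₀n, hn⟩ := Nat.mem_primeFactors.mp (hp i₀ hi₀)
  set v := n.factorization (p i₀)
  have hrest : p i₀ ^ v ∣ ∑ i ∈ s.erase i₀, k i * (n / p i) := by
    refine dvd_sum fun i hi => Dvd.dvd.mul_left ?_ _
    obtain ⟨hne, his⟩ := mem_erase.mp hi
    obtain ⟨hpi, hpin, -⟩ := Nat.mem_primeFactors.mp (hp i his)
    have hcop : Nat.Coprime (p i₀ ^ v) (p i) :=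
      ((Nat.coprime_primes hp₀ hpi).mpr fun h => hne (hinj his hi₀ h.symm)).pow_left _
    refine hcop.dvd_of_dvd_mul_left ?_
    rw [Nat.mul_div_cancel' hpin]
    exact Nat.ordProj_dvd n _
  have hfirst : ¬ p i₀ ^ v ∣ k i₀ * (n / p i₀) := fun h => by
    have hcop : Nat.Coprime (p i₀ ^ v) (k i₀) := (hp₀.coprime_pow_of_not_dvd hk).symm
    have : p i₀ ^ (v + 1) ∣ n := by
      rw [pow_succ, ← Nat.mul_div_cancel' hp₀n, mul_comm (p i₀)]
      exact mul_dvd_mul_right (hcop.dvd_of_dvd_mul_left h) _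
    exact Nat.pow_succ_factorization_not_dvd hn hp₀ this
  intro hdvd
  rw [← add_sum_erase s _ hi₀] at hdvd
  exact hfirst ((Nat.dvd_add_left hrest).mp ((Nat.ordProj_dvd n _).trans hdvd))

section Sieve

variable {𝕜 α : Type*} [RCLike 𝕜]

theorem card_le_of_prod_one_add_eq_zero {ι : Type*} (S : Finset α) (P : Finset ι)
    (a : ι → α → 𝕜) (K : ℝ) (hzero : ∀ x ∈ S, ∏ i ∈ P, (1 + a i x) = 0)
    (hbound : ∀ T ⊆ P, T.Nonempty → ‖∑ x ∈ S, ∏ i ∈ T, a i x‖ ≤ K) :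
    (#S : ℝ) ≤ (2 ^ #P - 1) * K := by
  classical
  have hexpand : ∑ x ∈ S, ∏ i ∈ P, (1 + a i x) =
      #S + ∑ T ∈ P.powerset.erase ∅, ∑ x ∈ S, ∏ i ∈ T, a i x := by
    simp_rw [prod_one_add]
    rw [sum_comm, ← add_sum_erase _ _ (empty_mem_powerset P)]
    simp
  rw [sum_eq_zero hzero, eq_comm] at hexpand
  calc (#S : ℝ) = ‖(#S : 𝕜)‖ := (RCLike.norm_natCast _).symm
    _ = ‖∑ T ∈ P.powerset.erase ∅, ∑ x ∈ S, ∏ i ∈ T, a i x‖ := by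
      rw [eq_neg_of_add_eq_zero_left hexpand, norm_neg]
    _ ≤ ∑ T ∈ P.powerset.erase ∅, K := by
      refine norm_sum_le_of_le _ fun T hT => ?_
      obtain ⟨hne, hTP⟩ := mem_erase.mp hT
      exact hbound T (mem_powerset.mp hTP) (nonempty_iff_ne_empty.mpr hne)
    _ = (2 ^ #P - 1) * K := by
      rw [sum_const, card_erase_of_mem (empty_mem_powerset P), card_powerset, nsmul_eq_mul,
        Nat.cast_sub Nat.one_le_two_pow]
      push_cast
      ring

-- As `∑_{k<p} ζ ^ k` is `p` or `0` according as `ζ = 1` or not, for `ψ` of order `n` the value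
-- `1 + sieveFactor n p (ψ γ)` is `p / (p - 1)` times the indicator of `γ ^ (n / p) ≠ 1`.
def sieveFactor (n p : ℕ) (z : 𝕜) : 𝕜 :=
  -((p - 1 : ℕ) : 𝕜)⁻¹ * ∑ k ∈ Ico 1 p, z ^ (k * (n / p))

theorem one_add_sieveFactor_eq_zero {n p : ℕ} (hp : 2 ≤ p) {z : 𝕜} (hz : z ^ (n / p) = 1) :
    1 + sieveFactor n p z = 0 := by
  have hsum : ∑ k ∈ Ico 1 p, z ^ (k * (n / p)) = ((p - 1 : ℕ) : 𝕜) := by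
    simp [mul_comm _ (n / p), pow_mul, hz]
  rw [sieveFactor, hsum, neg_mul, inv_mul_cancel₀ (Nat.cast_ne_zero.mpr (by omega)),
    add_neg_cancel]

theorem sum_prod_sieveFactor (n : ℕ) (S : Finset α) (z : α → 𝕜) (T : Finset ℕ) :
    ∑ x ∈ S, ∏ p ∈ T, sieveFactor n p (z x) =
      (∏ p ∈ T, -((p - 1 : ℕ) : 𝕜)⁻¹) * ∑ k ∈ T.pi fun p => Ico 1 p,
        ∑ x ∈ S, z x ^ ∑ p ∈ T.attach, k p p.2 * (n / p) := by
  simp_rw [sieveFactor, prod_mul_distrib, ← mul_sum, prod_sum, ← prod_pow_eq_pow_sum]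
  rw [sum_comm]

theorem norm_sum_prod_sieveFactor_le {n : ℕ} (S : Finset α) (z : α → 𝕜) {K : ℝ}
    (hK : ∀ m, ¬ n ∣ m → ‖∑ x ∈ S, z x ^ m‖ ≤ K) {T : Finset ℕ} (hT : T ⊆ n.primeFactors)
    (hTne : T.Nonempty) :
    ‖∑ x ∈ S, ∏ p ∈ T, sieveFactor n p (z x)‖ ≤ K := by
  classical
  have hpos : ∀ p ∈ T, (0 : ℝ) < (p - 1 : ℕ) := fun p hp => by
    have := (Nat.prime_of_mem_primeFactors (hT hp)).two_le
    exact_mod_cast (by omega : 0 < p - 1)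
  have hinner : ‖∑ k ∈ T.pi fun p => Ico 1 p, ∑ x ∈ S, z x ^ ∑ p ∈ T.attach, k p p.2 * (n / p)‖
      ≤ (∏ p ∈ T, ((p - 1 : ℕ) : ℝ)) * K := by
    refine (norm_sum_le_of_le _ fun k hk => hK _ ?_).trans_eq ?_
    · obtain ⟨p₀, hp₀⟩ := hTne
      refine Nat.not_dvd_sum_mul_div_primeFactors (fun p _ => hT p.2) Subtype.val_injective.injOn
        (mem_attach _ ⟨p₀, hp₀⟩) fun h => ?_
      have hk₀ := mem_Ico.mp (mem_pi.mp hk p₀ hp₀)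
      exact Nat.not_dvd_of_pos_of_lt hk₀.1 hk₀.2 h
    · rw [sum_const, nsmul_eq_mul, card_pi]
      simp
  rw [sum_prod_sieveFactor, norm_mul, norm_prod]
  calc _ ≤ (∏ p ∈ T, ‖-((p - 1 : ℕ) : 𝕜)⁻¹‖) * ((∏ p ∈ T, ((p - 1 : ℕ) : ℝ)) * K) :=
        mul_le_mul_of_nonneg_left hinner (by positivity)
    _ = K := by
      simp_rw [norm_neg, norm_inv, RCLike.norm_natCast]
      rw [prod_inv_distrib, inv_mul_cancel_left₀ (prod_pos hpos).ne']

end Sieve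

theorem exists_pow_card_div_prime_eq_one_of_zpowers_ne_top {G : Type*} [Group G] [Finite G]
    {γ : G} (hγ : Subgroup.zpowers γ ≠ ⊤) :
    ∃ p ∈ (Nat.card G).primeFactors, γ ^ (Nat.card G / p) = 1 := by
  by_contra! h
  refine hγ (Subgroup.eq_top_of_card_eq _ ?_)
  rw [Nat.card_zpowers]
  exact orderOf_eq_of_pow_and_pow_div_prime Nat.card_pos pow_card_eq_one' fun p hp hpG =>
    h p (Nat.mem_primeFactors.mpr ⟨hp, hpG, Nat.card_pos.ne'⟩)

theorem stmt_10_general (q r : ℕ)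
    (F : Type*) [Field F] [Fintype F] (hF : Fintype.card F = q ^ r)
    (A : Set Fˣ) (K : ℝ)
    (hK : ∀ χ : MulChar F ℂ, χ ≠ 1 → orderOf χ ∣ q ^ r - 1 →
      ‖∑ᶠ γ ∈ A, χ (γ : F)‖ ≤ K)
    (hA : (A.ncard : ℝ) > ((2 : ℝ) ^ (q ^ r - 1).primeFactors.card - 1) * K) :
    ∃ γ ∈ A, Subgroup.zpowers γ = ⊤ := by
  classical
  obtain ⟨S, rfl⟩ := A.toFinite.exists_finset_coe
  set n := q ^ r - 1
  have hcard : Nat.card Fˣ = n := by rw [Nat.card_eq_fintype_card, Fintype.card_units, hF]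
  have hn : n ≠ 0 := hcard ▸ Nat.card_pos.ne'
  obtain ⟨ψ, hψ⟩ := MulChar.exists_mulChar_orderOf F (n := n) (by rw [hF])
    (Complex.isPrimitiveRoot_exp n hn)
  have hsum : ∀ m, ¬ n ∣ m → ‖∑ γ ∈ S, ψ (γ : F) ^ m‖ ≤ K := fun m hm => by
    have hψm : ψ ^ m ≠ 1 := by rwa [Ne, ← orderOf_dvd_iff_pow_eq_one, hψ]
    simpa only [finsum_mem_coe_finset, MulChar.pow_apply_coe] using
      hK _ hψm (hψ ▸ orderOf_pow_dvd m)
  by_contra! hprim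
  refine hA.not_ge ?_
  rw [Set.ncard_coe_finset]
  refine card_le_of_prod_one_add_eq_zero S n.primeFactors
    (fun p γ => sieveFactor n p (ψ (γ : F))) K (fun γ hγ => ?_)
    fun T hT hTne => norm_sum_prod_sieveFactor_le S _ hsum hT hTne
  obtain ⟨p, hp, hγp⟩ := exists_pow_card_div_prime_eq_one_of_zpowers_ne_top (hprim γ hγ)
  rw [hcard] at hp hγp
  refine prod_eq_zero hp (one_add_sieveFactor_eq_zero (Nat.prime_of_mem_primeFactors hp).two_le ?_)
  rw [← map_pow, ← Units.val_pow_eq_pow_val, hγp, Units.val_one, map_one]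

/-- The unsieved bound. -/
theorem stmt_10 (q r : ℕ) (hq : IsPrimePow q) (hr : 1 ≤ r)
    (F : Type*) [Field F] [Fintype F] (hF : Fintype.card F = q ^ r)
    (A : Set Fˣ) (K : ℝ)
    (hK : ∀ χ : MulChar F ℂ, χ ≠ 1 → orderOf χ ∣ q ^ r - 1 →
      ‖∑ᶠ γ ∈ A, χ (γ : F)‖ ≤ K)
    (hA : (A.ncard : ℝ) > ((2 : ℝ) ^ (q ^ r - 1).primeFactors.card - 1) * K) :
    ∃ γ ∈ A, Subgroup.zpowers γ = ⊤ :=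
  stmt_10_general q r F hF A K hK hA
end

section
/- (Prime sieve) Suppose rad(q^r−1) = k·p_1···p_s with distinct primes p_i coprime to k, δ = 1 − Σ_{i=1}^s 1/p_i > 0, and K bounds |Σ_{γ∈A} χ(γ)| for all nontrivial multiplicative characters χ of order dividing q^r−1. If |A| > [W(k)(s + 2δ − 1) − δ]/δ · K, then A contains a primitive element of F_{q^r}^*. -/
open Finset

theorem Finset.sum_card_filter_le {α κ : Type*} (B : Finset α) (I : Finset κ) (R : κ → α → Prop)
    [∀ i, DecidablePred (R i)] :
    ∑ i ∈ I, (#{a ∈ B | R i a} : ℝ) ≤ (#I - 1) * #B + #{a ∈ B | ∀ i ∈ I, R i a} := by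
  have hpoint (a : α) :
      (#{i ∈ I | R i a} : ℝ) ≤ (#I - 1) + if ∀ i ∈ I, R i a then 1 else 0 := by
    split_ifs with hall
    · rw [sub_add_cancel]
      exact_mod_cast card_filter_le I (R · a)
    · have hlt : #{i ∈ I | R i a} < #I := card_lt_card <| filter_ssubset.mpr (by simpa using hall)
      rw [add_zero, le_sub_iff_add_le]
      exact_mod_cast hlt
  simp only [natCast_card_filter]
  rw [sum_comm]
  calc _ ≤ ∑ a ∈ B, ((#I - 1 : ℝ) + if ∀ i ∈ I, R i a then 1 else 0) :=
        sum_le_sum fun a _ => by simpa only [natCast_card_filter] using hpoint a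
    _ = _ := by rw [sum_add_distrib, sum_const, nsmul_eq_mul, mul_comm]

theorem zpowers_eq_top_of_forall_prime_pow_ne_one {G : Type*} [Group G] [Finite G] {x : G}
    (hx : ∀ ℓ, ℓ.Prime → ℓ ∣ Nat.card G → x ^ (Nat.card G / ℓ) ≠ 1) :
    Subgroup.zpowers x = ⊤ := by
  have hdvd : orderOf x ∣ Nat.card G := orderOf_dvd_natCard x
  suffices orderOf x = Nat.card G from
    Subgroup.eq_top_of_card_eq _ (by rw [Nat.card_zpowers, this])
  by_contra hne
  obtain ⟨ℓ, hℓ, hℓdvd⟩ :=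
    Nat.exists_prime_and_dvd fun h => hne (Nat.eq_of_dvd_of_div_eq_one hdvd h)
  have hmul : ℓ * orderOf x ∣ Nat.card G := mul_comm ℓ _ ▸ Nat.mul_dvd_of_dvd_div hdvd hℓdvd
  exact hx ℓ hℓ (dvd_of_mul_right_dvd hmul)
    (orderOf_dvd_iff_pow_eq_one.mp (Nat.dvd_div_of_mul_dvd hmul))

lemma Nat.primeFactors_eq_union_of_radical_eq {n k s : ℕ} {p : Fin s → ℕ} (hp : ∀ i, (p i).Prime)
    (hrad : radical n = k * ∏ i, p i) :
    n.primeFactors = k.primeFactors ∪ univ.image p := by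
  have hprod : ∏ i, p i ≠ 0 := prod_ne_zero_iff.2 fun i _ => (hp i).ne_zero
  have hrad0 : radical n ≠ 0 :=
    prod_ne_zero_iff.2 fun ℓ h => (Nat.prime_of_mem_primeFactors h).ne_zero
  have hk : k ≠ 0 := left_ne_zero_of_mul (hrad ▸ hrad0)
  rw [← Nat.primeFactors_prod_primeFactors n]
  change (radical n).primeFactors = _
  rw [hrad, Nat.primeFactors_mul hk hprod]
  congr 1
  ext ℓ
  simp only [Nat.mem_primeFactors_of_ne_zero hprod, mem_image, mem_univ, true_and]
  constructor
  · rintro ⟨hℓ, hdvd⟩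
    obtain ⟨i, -, hi⟩ := hℓ.prime.dvd_finsetProd_iff _ |>.mp hdvd
    exact ⟨i, ((Nat.prime_dvd_prime_iff_eq hℓ (hp i)).mp hi).symm⟩
  · rintro ⟨i, rfl⟩
    exact ⟨hp i, dvd_prod_of_mem p (mem_univ i)⟩

@[simps]
def MulChar.unitsEval (M R : Type*) [CommMonoid M] [CommMonoidWithZero R] :
    MulChar M R →* (Mˣ → R) where
  toFun χ u := χ u
  map_one' := funext MulChar.one_apply_coe
  map_mul' _ _ := rfl

lemma MulChar.exists_orderOf_eq_card_units (F R : Type*) [Field F] [Fintype F] [Field R]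
    [IsAlgClosed R] [CharZero R] :
    ∃ χ : MulChar F R, orderOf χ = Nat.card Fˣ := by
  have : NeZero (Monoid.exponent Fˣ : R) :=
    ⟨Nat.cast_ne_zero.mpr Monoid.exponent_ne_zero_of_finite⟩
  obtain ⟨e⟩ := MulChar.mulEquiv_units F R
  obtain ⟨g, hg⟩ := IsCyclic.exists_ofOrder_eq_natCard (α := Fˣ)
  exact ⟨e.symm g, by rw [MulEquiv.orderOf_eq, hg]⟩

namespace PrimeSieve

variable {ι X : Type*} [CommMonoid X] (ev : X →* (ι → ℂ))

noncomputable def factor (ω : X) (ℓ : ℕ) (γ : ι) : ℂ :=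
  1 - (ℓ : ℂ)⁻¹ * ∑ t ∈ range ℓ, ev (ω ^ t) γ

lemma factor_eq_ite {ω : X} {ℓ : ℕ} (hω : ω ^ ℓ = 1) (hℓ : ℓ ≠ 0) (γ : ι) :
    factor ev ω ℓ γ = if ev ω γ ≠ 1 then 1 else 0 := by
  have hpow (t : ℕ) : ev (ω ^ t) γ = ev ω γ ^ t := by rw [map_pow, Pi.pow_apply]
  simp only [factor, hpow]
  split_ifs with h
  · rw [geom_sum_eq h, ← hpow, hω, map_one, Pi.one_apply, sub_self, zero_div, mul_zero, sub_zero]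
  · rw [not_not.mp h]
    simp [hℓ]

lemma factor_eq_sub_sum_Ico (ω : X) {ℓ : ℕ} (hℓ : 0 < ℓ) (γ : ι) :
    factor ev ω ℓ γ = (1 - (ℓ : ℂ)⁻¹) - (ℓ : ℂ)⁻¹ * ∑ t ∈ Ico 1 ℓ, ev (ω ^ t) γ := by
  rw [factor, range_eq_Ico, sum_eq_sum_Ico_succ_bot hℓ, pow_zero, map_one, Pi.one_apply]
  ring

variable (ω : ℕ → X) (T : Finset ι)

noncomputable def twistedSum (E : Finset ℕ) (χ : X) : ℂ :=
  ∑ γ ∈ T, ev χ γ * ∏ ℓ ∈ E, factor ev (ω ℓ) ℓ γ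

open Classical in
noncomputable def freeCount (E : Finset ℕ) : ℕ := #{γ ∈ T | ∀ ℓ ∈ E, ev (ω ℓ) γ ≠ 1}

noncomputable def density (E : Finset ℕ) : ℝ := ∏ ℓ ∈ E, (1 - (ℓ : ℝ)⁻¹)

variable {ev ω T}

lemma density_insert {E : Finset ℕ} {ℓ : ℕ} (hℓE : ℓ ∉ E) :
    density (insert ℓ E) = (1 - (ℓ : ℝ)⁻¹) * density E := prod_insert hℓE

lemma one_sub_inv_pos {ℓ : ℕ} (hℓ : ℓ.Prime) : 0 < 1 - (ℓ : ℝ)⁻¹ := by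
  have : (1 : ℝ) < ℓ := by exact_mod_cast hℓ.one_lt
  linarith [inv_lt_one_of_one_lt₀ this]

lemma density_pos {E : Finset ℕ} (hE : ∀ ℓ ∈ E, ℓ.Prime) : 0 < density E :=
  prod_pos fun ℓ hℓ => one_sub_inv_pos (hE ℓ hℓ)

lemma twistedSum_one {E : Finset ℕ} (hE : ∀ ℓ ∈ E, ℓ.Prime ∧ orderOf (ω ℓ) = ℓ) :
    twistedSum ev ω T E 1 = freeCount ev ω T E := by
  classical
  have hfactor (γ : ι) : ∀ ℓ ∈ E, factor ev (ω ℓ) ℓ γ = if ev (ω ℓ) γ ≠ 1 then 1 else 0 :=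
    fun ℓ hℓ => factor_eq_ite ev (by simpa only [(hE ℓ hℓ).2] using pow_orderOf_eq_one (ω ℓ))
      (hE ℓ hℓ).1.ne_zero γ
  simp only [twistedSum, map_one, Pi.one_apply, one_mul, fun γ => prod_congr rfl (hfactor γ),
    prod_boole, sum_boole, freeCount]

lemma twistedSum_insert {E : Finset ℕ} {ℓ : ℕ} (hℓE : ℓ ∉ E) (hℓ : 0 < ℓ) (χ : X) :
    twistedSum ev ω T (insert ℓ E) χ = (1 - (ℓ : ℂ)⁻¹) * twistedSum ev ω T E χ
      - (ℓ : ℂ)⁻¹ * ∑ t ∈ Ico 1 ℓ, twistedSum ev ω T E (χ * ω ℓ ^ t) := by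
  simp only [twistedSum, prod_insert hℓE, factor_eq_sub_sum_Ico ev _ hℓ, map_mul, Pi.mul_apply]
  rw [sum_comm, mul_sum, mul_sum, ← sum_sub_distrib]
  refine sum_congr rfl fun γ _ => ?_
  rw [← sum_mul, ← mul_sum]
  ring

lemma norm_inv_mul_sum_Ico_le {ℓ : ℕ} (hℓ : 0 < ℓ) {f : ℕ → ℂ} {B : ℝ}
    (hf : ∀ t ∈ Ico 1 ℓ, ‖f t‖ ≤ B) :
    ‖(ℓ : ℂ)⁻¹ * ∑ t ∈ Ico 1 ℓ, f t‖ ≤ (1 - (ℓ : ℝ)⁻¹) * B := by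
  have hsum := (norm_sum_le _ _).trans (sum_le_card_nsmul _ _ _ hf)
  rw [Nat.card_Ico, nsmul_eq_mul, Nat.cast_sub hℓ, Nat.cast_one] at hsum
  have hℓ' : (0 : ℝ) < ℓ := by exact_mod_cast hℓ
  calc ‖(ℓ : ℂ)⁻¹ * ∑ t ∈ Ico 1 ℓ, f t‖ ≤ (ℓ : ℝ)⁻¹ * ((ℓ - 1) * B) := by
        rw [norm_mul, norm_inv, Complex.norm_natCast]
        exact mul_le_mul_of_nonneg_left hsum (by positivity)
    _ = (1 - (ℓ : ℝ)⁻¹) * B := by field_simp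

lemma orderOf_mul_pow_eq {χ ω : X} {ℓ t : ℕ} (hℓ : ℓ.Prime) (hω : orderOf ω = ℓ)
    (hχ : (orderOf χ).Coprime ℓ) (ht : t ∈ Ico 1 ℓ) :
    orderOf (χ * ω ^ t) = orderOf χ * ℓ := by
  obtain ⟨ht1, htℓ⟩ := mem_Ico.mp ht
  have hωt : orderOf (ω ^ t) = ℓ := by
    rw [orderOf_pow' _ (by omega), hω, (Nat.coprime_of_lt_prime (by omega) htℓ hℓ).gcd_eq_one,
      Nat.div_one]
  rw [(Commute.all _ _).orderOf_mul_eq_mul_orderOf_of_coprime (hωt ▸ hχ), hωt]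

lemma mul_pow_ne_one_and_coprime {E : Finset ℕ} {χ ω : X} {ℓ t : ℕ} (hℓ : ℓ.Prime)
    (hω : orderOf ω = ℓ) (hE : ∀ ℓ' ∈ E, ℓ'.Prime) (hℓE : ℓ ∉ E)
    (hχ : ∀ ℓ' ∈ insert ℓ E, (orderOf χ).Coprime ℓ') (ht : t ∈ Ico 1 ℓ) :
    χ * ω ^ t ≠ 1 ∧ ∀ ℓ' ∈ E, (orderOf (χ * ω ^ t)).Coprime ℓ' := by
  have hord := orderOf_mul_pow_eq hℓ hω (hχ ℓ (mem_insert_self ℓ E)) ht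
  refine ⟨fun h1 => ?_, fun ℓ' h => ?_⟩
  · rw [h1, orderOf_one] at hord
    exact hℓ.one_lt.ne' (Nat.eq_one_of_mul_eq_one_left hord.symm)
  · rw [hord]
    exact (hχ ℓ' (mem_insert_of_mem h)).mul_left
      ((Nat.coprime_primes hℓ (hE ℓ' h)).mpr fun hh => hℓE (hh ▸ h))

/- The coprimality invariant is what keeps every twist `χ * ω ℓ ^ t` met in the recursion
nontrivial, so that only the untwisted sum contributes a main term. -/
theorem norm_twistedSum_sub_le [DecidableEq X] {K : ℝ}
    (hK : ∀ χ : X, χ ≠ 1 → ‖∑ γ ∈ T, ev χ γ‖ ≤ K) (E : Finset ℕ)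
    (hE : ∀ ℓ ∈ E, ℓ.Prime ∧ orderOf (ω ℓ) = ℓ) (χ : X) (hχ : ∀ ℓ ∈ E, (orderOf χ).Coprime ℓ) :
    ‖twistedSum ev ω T E χ - (((if χ = 1 then 1 else 0) * density E * #T : ℝ) : ℂ)‖
      ≤ density E * (2 ^ #E - if χ = 1 then 1 else 0) * K := by
  induction E using Finset.induction_on generalizing χ with
  | empty =>
    by_cases h : χ = 1
    · simp [h, twistedSum, density]
    · simpa [h, twistedSum, density] using hK χ h
  | @insert ℓ E hℓE ih =>
    obtain ⟨hℓ, hωℓ⟩ := hE ℓ (mem_insert_self ℓ E)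
    have hE' : ∀ ℓ' ∈ E, ℓ'.Prime ∧ orderOf (ω ℓ') = ℓ' := fun ℓ' h => hE ℓ' (mem_insert_of_mem h)
    have hshift : ∀ t ∈ Ico 1 ℓ, ‖twistedSum ev ω T E (χ * ω ℓ ^ t)‖ ≤ density E * 2 ^ #E * K := by
      intro t ht
      obtain ⟨hne, hcop⟩ :=
        mul_pow_ne_one_and_coprime hℓ hωℓ (fun ℓ' h => (hE' ℓ' h).1) hℓE hχ ht
      simpa [hne] using ih hE' _ hcop
    have hIH := ih hE' χ fun ℓ' h => hχ ℓ' (mem_insert_of_mem h)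
    set e : ℝ := if χ = 1 then 1 else 0
    have hc : (0 : ℝ) ≤ 1 - (ℓ : ℝ)⁻¹ := (one_sub_inv_pos hℓ).le
    rw [twistedSum_insert hℓE hℓ.pos, density_insert hℓE, card_insert_of_notMem hℓE]
    calc _ = ‖((1 - (ℓ : ℝ)⁻¹ : ℝ) : ℂ) * (twistedSum ev ω T E χ - ((e * density E * #T : ℝ) : ℂ))
            - (ℓ : ℂ)⁻¹ * ∑ t ∈ Ico 1 ℓ, twistedSum ev ω T E (χ * ω ℓ ^ t)‖ := by
          congr 1; push_cast; ring
      _ ≤ (1 - (ℓ : ℝ)⁻¹) * (density E * (2 ^ #E - e) * K)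
            + (1 - (ℓ : ℝ)⁻¹) * (density E * 2 ^ #E * K) := by
          refine (norm_sub_le _ _).trans (add_le_add ?_ (norm_inv_mul_sum_Ico_le hℓ.pos hshift))
          rw [norm_mul, Complex.norm_real, Real.norm_of_nonneg hc]
          exact mul_le_mul_of_nonneg_left hIH hc
      _ = _ := by ring

lemma abs_freeCount_sub_le {K : ℝ} (hK : ∀ χ : X, χ ≠ 1 → ‖∑ γ ∈ T, ev χ γ‖ ≤ K) {E : Finset ℕ}
    (hE : ∀ ℓ ∈ E, ℓ.Prime ∧ orderOf (ω ℓ) = ℓ) :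
    |(freeCount ev ω T E : ℝ) - density E * #T| ≤ density E * (2 ^ #E - 1) * K := by
  classical
  have h := norm_twistedSum_sub_le hK E hE 1 (by simp)
  rw [twistedSum_one hE] at h
  rw [← Real.norm_eq_abs, ← Complex.norm_real]
  push_cast
  simpa using h

lemma abs_freeCount_insert_sub_le {K : ℝ} (hK : ∀ χ : X, χ ≠ 1 → ‖∑ γ ∈ T, ev χ γ‖ ≤ K)
    {E : Finset ℕ} {ℓ : ℕ} (hℓE : ℓ ∉ E)
    (hE : ∀ ℓ' ∈ insert ℓ E, ℓ'.Prime ∧ orderOf (ω ℓ') = ℓ') :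
    |(freeCount ev ω T (insert ℓ E) : ℝ) - (1 - (ℓ : ℝ)⁻¹) * freeCount ev ω T E|
      ≤ (1 - (ℓ : ℝ)⁻¹) * (density E * 2 ^ #E * K) := by
  classical
  obtain ⟨hℓ, hωℓ⟩ := hE ℓ (mem_insert_self ℓ E)
  have hE' : ∀ ℓ' ∈ E, ℓ'.Prime ∧ orderOf (ω ℓ') = ℓ' := fun ℓ' h => hE ℓ' (mem_insert_of_mem h)
  have hshift : ∀ t ∈ Ico 1 ℓ, ‖twistedSum ev ω T E (ω ℓ ^ t)‖ ≤ density E * 2 ^ #E * K := by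
    intro t ht
    obtain ⟨hne, hcop⟩ := mul_pow_ne_one_and_coprime hℓ hωℓ (fun ℓ' h => (hE' ℓ' h).1) hℓE
      (χ := 1) (by simp) ht
    rw [one_mul] at hne hcop
    simpa [hne] using norm_twistedSum_sub_le hK E hE' _ hcop
  have hrec := twistedSum_insert (ev := ev) (ω := ω) (T := T) hℓE hℓ.pos 1
  rw [twistedSum_one hE, twistedSum_one hE'] at hrec
  have key : (freeCount ev ω T (insert ℓ E) : ℂ) - (1 - (ℓ : ℂ)⁻¹) * freeCount ev ω T E
      = -((ℓ : ℂ)⁻¹ * ∑ t ∈ Ico 1 ℓ, twistedSum ev ω T E (ω ℓ ^ t)) := by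
    simp only [hrec, one_mul]
    ring
  rw [← Real.norm_eq_abs, ← Complex.norm_real]
  push_cast
  rw [key, norm_neg]
  exact norm_inv_mul_sum_Ico_le hℓ.pos hshift

lemma sum_freeCount_insert_le (P : Finset ℕ) {s : ℕ} (p : Fin s → ℕ) :
    ∑ i, (freeCount ev ω T (insert (p i) P) : ℝ)
      ≤ (s - 1) * freeCount ev ω T P + freeCount ev ω T (P ∪ univ.image p) := by
  classical
  have h := sum_card_filter_le {γ ∈ T | ∀ ℓ ∈ P, ev (ω ℓ) γ ≠ 1} univ
    fun i γ => ev (ω (p i)) γ ≠ 1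
  simp only [filter_filter, card_univ, Fintype.card_fin] at h
  convert h using 4 <;> simp only [freeCount] <;> congr 1 <;> ext γ <;> simp only [mem_filter]
  · rw [forall_mem_insert]
    tauto
  · simp only [mem_union, mem_image, mem_univ, true_and, or_imp, forall_and, forall_exists_index,
      forall_apply_eq_imp_iff, forall_const]

theorem freeCount_pos {K δ : ℝ} (hK : ∀ χ : X, χ ≠ 1 → ‖∑ γ ∈ T, ev χ γ‖ ≤ K) {P : Finset ℕ}
    {s : ℕ} {p : Fin s → ℕ} (hω : ∀ ℓ ∈ P ∪ univ.image p, ℓ.Prime ∧ orderOf (ω ℓ) = ℓ)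
    (hpP : ∀ i, p i ∉ P) (hδ : δ = 1 - ∑ i, 1 / (p i : ℝ)) (hδpos : 0 < δ)
    (hT : (2 ^ #P * ((s : ℝ) + 2 * δ - 1) - δ) / δ * K < #T) :
    0 < freeCount ev ω T (P ∪ univ.image p) := by
  have hP : ∀ ℓ ∈ P, ℓ.Prime ∧ orderOf (ω ℓ) = ℓ := fun ℓ h => hω ℓ (mem_union_left _ h)
  have hins (i : Fin s) : ∀ ℓ ∈ insert (p i) P, ℓ.Prime ∧ orderOf (ω ℓ) = ℓ := by
    intro ℓ h
    rcases mem_insert.mp h with rfl | h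
    · exact hω _ (mem_union_right _ (mem_image_of_mem _ (mem_univ i)))
    · exact hP ℓ h
  set θ := density P
  set W : ℝ := 2 ^ #P
  set N : ℝ := (freeCount ev ω T P : ℝ)
  have hN : θ * #T - θ * (W - 1) * K ≤ N := by
    linarith [(abs_le.mp (abs_freeCount_sub_le hK hP)).1]
  have hNins (i : Fin s) : (1 - (p i : ℝ)⁻¹) * N - (1 - (p i : ℝ)⁻¹) * (θ * W * K)
      ≤ freeCount ev ω T (insert (p i) P) := by
    linarith [(abs_le.mp (abs_freeCount_insert_sub_le hK (hpP i) (hins i))).1]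
  have hweights : ∑ i, (1 - (p i : ℝ)⁻¹) = s - 1 + δ := by
    simp only [hδ, sum_sub_distrib, sum_const, card_univ, Fintype.card_fin, one_div]
    ring
  have hsieve : δ * N - (s - 1 + δ) * (θ * W * K) ≤ freeCount ev ω T (P ∪ univ.image p) := by
    have := (sum_le_sum fun i _ => hNins i).trans (sum_freeCount_insert_le P p)
    rw [sum_sub_distrib, ← sum_mul, ← sum_mul, hweights] at this
    linarith
  have hT' : (W * ((s : ℝ) + 2 * δ - 1) - δ) * K < δ * #T := by
    rwa [div_mul_eq_mul_div, div_lt_iff₀ hδpos, mul_comm (#T : ℝ)] at hT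
  have hmain : 0 < θ * (δ * #T - (W * ((s : ℝ) + 2 * δ - 1) - δ) * K) :=
    mul_pos (density_pos fun ℓ h => (hP ℓ h).1) (by linarith)
  have : (0 : ℝ) < freeCount ev ω T (P ∪ univ.image p) := by
    linarith [mul_le_mul_of_nonneg_left hN hδpos.le]
  exact_mod_cast this

end PrimeSieve

theorem stmt_11_general (q r : ℕ)
    (F : Type*) [Field F] [Fintype F] (hF : Fintype.card F = q ^ r)
    (s k : ℕ) (p : Fin s → ℕ)
    (hp : ∀ i, (p i).Prime)
    (hpk : ∀ i, ¬ p i ∣ k)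
    (hrad : radical (q ^ r - 1) = k * ∏ i, p i)
    (A : Set Fˣ) (K : ℝ)
    (hK : ∀ χ : MulChar F ℂ, χ ≠ 1 → orderOf χ ∣ q ^ r - 1 →
      ‖∑ᶠ γ ∈ A, χ (γ : F)‖ ≤ K)
    (δ : ℝ) (hδ : δ = 1 - ∑ i, 1 / (p i : ℝ)) (hδpos : δ > 0)
    (hA : (A.ncard : ℝ) >
      ((2 : ℝ) ^ k.primeFactors.card * ((s : ℝ) + 2 * δ - 1) - δ) / δ * K) :
    ∃ γ ∈ A, Subgroup.zpowers γ = ⊤ := by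
  classical
  set n := q ^ r - 1
  have hn : Nat.card Fˣ = n := by rw [Nat.card_eq_fintype_card, Fintype.card_units, hF]
  have hn0 : n ≠ 0 := hn ▸ Nat.card_pos.ne'
  obtain ⟨χ, hχ⟩ := MulChar.exists_orderOf_eq_card_units F ℂ
  rw [hn] at hχ
  have hprimes := Nat.primeFactors_eq_union_of_radical_eq hp hrad
  have hω : ∀ ℓ ∈ k.primeFactors ∪ univ.image p, ℓ.Prime ∧ orderOf (χ ^ (n / ℓ)) = ℓ := by
    intro ℓ hℓ
    obtain ⟨hℓp, hℓn, -⟩ := Nat.mem_primeFactors.mp (hprimes ▸ hℓ)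
    rw [← hχ] at hℓn ⊢
    exact ⟨hℓp, orderOf_pow_orderOf_div (hχ ▸ hn0) hℓn⟩
  have hK' (ψ : MulChar F ℂ) (hψ : ψ ≠ 1) : ‖∑ γ ∈ A.toFinset, MulChar.unitsEval F ℂ ψ γ‖ ≤ K := by
    have h := hK ψ hψ (orderOf_dvd_of_pow_eq_one (by
      simpa [← Nat.card_eq_fintype_card, hn] using ψ.pow_card_eq_one))
    rwa [← Set.coe_toFinset A, finsum_mem_coe_finset] at h
  obtain ⟨γ, hγ⟩ := card_pos.mp (PrimeSieve.freeCount_pos hK' hω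
    (fun i h => hpk i (Nat.dvd_of_mem_primeFactors h)) hδ hδpos
    (by rwa [← Set.ncard_eq_toFinset_card']))
  rw [mem_filter, Set.mem_toFinset] at hγ
  refine ⟨γ, hγ.1, zpowers_eq_top_of_forall_prime_pow_ne_one fun ℓ hℓ hℓn h => hγ.2 ℓ ?_ ?_⟩
  · rw [← hprimes]
    exact Nat.mem_primeFactors.mpr ⟨hℓ, hn ▸ hℓn, hn0⟩
  · rw [hn] at h
    simp [MulChar.pow_apply_coe, ← map_pow, ← Units.val_pow_eq_pow_val, h]

/-- The prime sieve. -/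
theorem stmt_11 (q r : ℕ) (hq : IsPrimePow q) (hr : 2 ≤ r)
    (F : Type*) [Field F] [Fintype F] (hF : Fintype.card F = q ^ r)
    (s k : ℕ) (p : Fin s → ℕ)
    (hp : ∀ i, (p i).Prime) (hinj : Function.Injective p)
    (hpk : ∀ i, ¬ p i ∣ k)
    (hrad : radical (q ^ r - 1) = k * ∏ i, p i)
    (A : Set Fˣ) (K : ℝ)
    (hK : ∀ χ : MulChar F ℂ, χ ≠ 1 → orderOf χ ∣ q ^ r - 1 →
      ‖∑ᶠ γ ∈ A, χ (γ : F)‖ ≤ K)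
    (δ : ℝ) (hδ : δ = 1 - ∑ i, 1 / (p i : ℝ)) (hδpos : δ > 0)
    (hA : (A.ncard : ℝ) >
      ((2 : ℝ) ^ k.primeFactors.card * ((s : ℝ) + 2 * δ - 1) - δ) / δ * K) :
    ∃ γ ∈ A, Subgroup.zpowers γ = ⊤ :=
  stmt_11_general q r F hF s k p hp hpk hrad A K hK δ hδ hδpos hA
end
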